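/- arXiv:math/0611025 — 4 statements merged into one kernel-verified Lean document; each statement's English description precedes it below -/
import Mathlib

section
/- Let D be the all-A dessin of a connected link projection P of a link K, with genus g(D), and let s(j,D) denote the number of spanning j-quasi-trees of D. Then the determinant of K satisfies det(K) = |Σ_{j=0}^{g(D)} (-1)^j s(j,D)|. -/
/-!
At a root `A` of `A⁴ = -1` the loop value `-A² - A⁻²` vanishes, so only the one-face spanning
sub-dessins survive in the state sum. A one-face sub-dessin is connected, so Euler's formula gives
`e(D) - 2 e(H) = (e(D) - 2v + 2) - 4 g(H)`, and since `A⁴ = -1` its term is a fixed unit `A^c`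
times `(-1)^{g(H)}`. Taking absolute values and grouping the quasi-trees by genus gives the formula.
-/

open Finset

theorem neg_sq_sub_zpow_neg_two_eq_zero {K : Type*} [Field K] {A : K} (hA : A ^ 4 = -1) :
    -A ^ 2 - A ^ (-2 : ℤ) = 0 := by
  have hinv : A ^ (-2 : ℤ) = -A ^ 2 := by
    rw [zpow_neg, zpow_ofNat]
    exact inv_eq_of_mul_eq_one_right (by linear_combination -hA)
  rw [hinv, sub_neg_eq_add, neg_add_cancel]

theorem zpow_sub_four_mul_of_pow_four_eq_neg_one {K : Type*} [Field K] {A : K}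
    (hA : A ^ 4 = -1) (c : ℤ) (m : ℕ) : A ^ (c - 4 * m) = A ^ c * (-1) ^ m := by
  have hA0 : A ≠ 0 := by rintro rfl; norm_num at hA
  rw [zpow_sub₀ hA0, zpow_mul, zpow_ofNat, hA, zpow_natCast, div_eq_mul_inv, ← inv_pow, inv_neg,
    inv_one]

theorem sum_mul_zero_pow_pred {ι R : Type*} [Semiring R] (s : Finset ι) (f : ι → R)
    (n : ι → ℕ) (hn : ∀ i ∈ s, 1 ≤ n i) :
    ∑ i ∈ s, f i * 0 ^ (n i - 1) = ∑ i ∈ s with n i = 1, f i := by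
  rw [sum_filter]
  refine sum_congr rfl fun i hi => ?_
  have := hn i hi
  by_cases h : n i = 1
  · simp [h]
  · simp [h, zero_pow (show n i - 1 ≠ 0 by omega)]

theorem sum_comp_eq_sum_range_mul_card {ι R : Type*} [CommSemiring R] (s : Finset ι)
    (φ : ℕ → R) (g : ι → ℕ) (N : ℕ) (hg : ∀ i ∈ s, g i ≤ N) :
    ∑ i ∈ s, φ (g i) = ∑ j ∈ range (N + 1), φ j * #{i ∈ s | g i = j} := by
  rw [← sum_fiberwise_of_maps_to (t := range (N + 1)) fun i hi => mem_range_succ_iff.2 (hg i hi)]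
  refine sum_congr rfl fun j _ => ?_
  rw [sum_congr rfl fun i hi => congrArg φ (mem_filter.1 hi).2, sum_const, nsmul_eq_mul, mul_comm]

theorem state_sum_eq_zpow_mul_sum_one_face {E : Type*} [Fintype E] (v : ℕ)
    (k fc g : Finset E → ℕ)
    (hEuler : ∀ H : Finset E, (v : ℤ) - H.card + fc H = 2 * k H - 2 * g H)
    (hk1 : ∀ H : Finset E, 1 ≤ k H) (hkf : ∀ H : Finset E, k H ≤ fc H)
    {A : ℂ} (hA : A ^ 4 = -1) :
    ∑ H : Finset E, A ^ ((Fintype.card E : ℤ) - 2 * H.card) * (-A ^ 2 - A ^ (-2 : ℤ)) ^ (fc H - 1)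
      = A ^ ((Fintype.card E : ℤ) - 2 * v + 2) * ∑ H with fc H = 1, ((-1) ^ g H : ℤ) := by
  rw [neg_sq_sub_zpow_neg_two_eq_zero hA,
    sum_mul_zero_pow_pred _ _ _ fun H _ => (hk1 H).trans (hkf H), Int.cast_sum, mul_sum]
  refine sum_congr rfl fun H hH => ?_
  have hface : fc H = 1 := (mem_filter.1 hH).2
  have hconn : k H = 1 := le_antisymm (hface ▸ hkf H) (hk1 H)
  have hexp : (Fintype.card E : ℤ) - 2 * H.card = (Fintype.card E - 2 * v + 2) - 4 * g H := by
    linarith [hEuler H, hface, hconn]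
  rw [hexp, zpow_sub_four_mul_of_pow_four_eq_neg_one hA]
  push_cast
  ring

theorem determinant_alternating_sum_of_quasi_trees_general
    (E : Type) [Fintype E] (v : ℕ)
    (k fc g : Finset E → ℕ)
    (hEuler : ∀ H : Finset E, (v : ℤ) - H.card + fc H = 2 * k H - 2 * g H)
    (hk1 : ∀ H : Finset E, 1 ≤ k H)
    (hkf : ∀ H : Finset E, k H ≤ fc H)
    (hgmax : ∀ H : Finset E, g H ≤ g Finset.univ)
    (A : ℂ) (hA : A ^ 4 = -1)
    (detK : ℕ)
    (hdet : (detK : ℝ) = ‖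
      (∑ H : Finset E, A ^ ((Fintype.card E : ℤ) - 2 * H.card) *
        (-A ^ 2 - A ^ (-2 : ℤ)) ^ (fc H - 1))‖) :
    detK = (∑ j ∈ Finset.range (g Finset.univ + 1),
      (-1 : ℤ) ^ j * Nat.card {H : Finset E // k H = 1 ∧ fc H = 1 ∧ g H = j}).natAbs := by
  have hnorm : ‖A‖ = 1 := Complex.norm_eq_one_of_pow_eq_one (n := 8)
    (by rw [show 8 = 4 * 2 by rfl, pow_mul, hA]; norm_num) (by norm_num)
  rw [state_sum_eq_zpow_mul_sum_one_face v k fc g hEuler hk1 hkf hA, norm_mul, norm_zpow, hnorm,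
    one_zpow, one_mul, Complex.norm_intCast, ← Int.cast_abs, ← Nat.cast_natAbs] at hdet
  rw [Nat.cast_injective hdet, sum_comp_eq_sum_range_mul_card _ _ _ _ fun H _ => hgmax H]
  congr 2 with j
  have hquasi : ∀ H : Finset E, (k H = 1 ∧ fc H = 1 ∧ g H = j) ↔ (fc H = 1 ∧ g H = j) :=
    fun H => ⟨fun h => h.2, fun h => ⟨le_antisymm (h.1 ▸ hkf H) (hk1 H), h⟩⟩
  simp only [hquasi, Nat.card_eq_fintype_card, Fintype.card_subtype, filter_filter]

/-- Let `D` be the all-`A` dessin of a connected projection `P` of a link `K`,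
with genus `g(D)`, and let `s(j, D)` be the number of spanning `j`-quasi-trees of `D`.
Then `det(K) = |Σ_{j=0}^{g(D)} (-1)^j s(j, D)|`.

The dessin is modeled abstractly: edges form a finite type `E`, `v` is the number of
vertices (state circles), and each spanning sub-dessin `H ⊆ E` has component count `k H`,
face count `fc H` and genus `g H` satisfying Euler's formula.  The determinant of `K` is
`|J_K(-1)|`, which equals the absolute value of the Kauffman bracket state sum
`⟨P⟩ = Σ_H A^{e(D)-2e(H)} (-A²-A^{-2})^{f(H)-1}` evaluated at any `A ∈ ℂ` with `A⁴ = -1`;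
this is hypothesis `hdet`.  A spanning `j`-quasi-tree is a connected spanning sub-dessin
with one face and genus `j`. -/
theorem determinant_alternating_sum_of_quasi_trees
    (E : Type) [Fintype E] [DecidableEq E] (v : ℕ) (hv : 1 ≤ v)
    (k fc g : Finset E → ℕ)
    (hEuler : ∀ H : Finset E, (v : ℤ) - H.card + fc H = 2 * k H - 2 * g H)
    (hk1 : ∀ H : Finset E, 1 ≤ k H)
    (hkf : ∀ H : Finset E, k H ≤ fc H)
    (hconn : k Finset.univ = 1)
    (hgmax : ∀ H : Finset E, g H ≤ g Finset.univ)
    (A : ℂ) (hA : A ^ 4 = -1)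
    (detK : ℕ)
    (hdet : (detK : ℝ) = ‖
      (∑ H : Finset E, A ^ ((Fintype.card E : ℤ) - 2 * H.card) *
        (-A ^ 2 - A ^ (-2 : ℤ)) ^ (fc H - 1))‖) :
    detK = (∑ j ∈ Finset.range (g Finset.univ + 1),
      (-1 : ℤ) ^ j * Nat.card {H : Finset E // k H = 1 ∧ fc H = 1 ∧ g H = j}).natAbs :=
  determinant_alternating_sum_of_quasi_trees_general E v k fc g hEuler hk1 hkf hgmax A hA detK hdet
end

section
/- For a link projection P whose all-A dessin D has one vertex, the Kauffman bracket evaluated at A^{-4} = -2 equals A^{e(D)} Σ_{H ⊆ D} (A^{-4})^{g(H)}, the sum over all spanning sub-dessins H of D. -/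
/-- Let `P` be a link projection whose all-`A` dessin `D` has one vertex.
Then the Kauffman bracket `⟨P⟩ = Σ_{H⊆D} A^{e(D)-2e(H)} (-A²-A^{-2})^{f(H)-1}`, evaluated
at `A^{-4} = -2`, equals `A^{e(D)} Σ_{H⊆D} (A^{-4})^{g(H)}`, the sums running over all
spanning sub-dessins `H` of `D`.

The one-vertex dessin is modeled by its edge set `E` with face count `fc H` and genus
`g H` of each sub-dessin, related by the (one-vertex) Euler formula
`1 - e(H) + f(H) = 2 - 2g(H)`. -/
theorem kauffman_bracket_at_minus_two
    (E : Type) [Fintype E] [DecidableEq E]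
    (fc g : Finset E → ℕ)
    (hf : ∀ H : Finset E, 1 ≤ fc H)
    (hEuler : ∀ H : Finset E, (1 : ℤ) - H.card + fc H = 2 - 2 * g H)
    (A : ℂ) (hA : A ^ (-4 : ℤ) = -2) :
    ∑ H : Finset E, A ^ ((Fintype.card E : ℤ) - 2 * H.card) *
        (-A ^ 2 - A ^ (-2 : ℤ)) ^ (fc H - 1) =
      A ^ ((Fintype.card E : ℤ)) * ∑ H : Finset E, (A ^ (-4 : ℤ)) ^ (g H) := by
  have hA0 : A ≠ 0 := by
    intro h
    rw [h, zero_zpow _ (by norm_num)] at hA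
    norm_num at hA
  rw [Finset.mul_sum]
  apply Finset.sum_congr rfl
  intro H _
  have h2 : -A ^ 2 - A ^ (-2 : ℤ) = A ^ 2 := by
    have h3 : A ^ (-2 : ℤ) = A ^ 2 * A ^ (-4 : ℤ) := by
      rw [← zpow_natCast A 2, ← zpow_add₀ hA0]; norm_num
    rw [h3, hA]; ring
  rw [h2]
  have hcast : ((fc H - 1 : ℕ) : ℤ) = H.card - 2 * g H := by
    rw [Nat.cast_sub (hf H)]; push_cast; linarith [hEuler H]
  rw [← zpow_natCast (A ^ 2) (fc H - 1), ← zpow_natCast A 2, ← zpow_mul,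
      ← zpow_add₀ hA0, ← zpow_natCast (A ^ (-4 : ℤ)) (g H), ← zpow_mul,
      ← zpow_add₀ hA0]
  congr 1
  rw [hcast]
  push_cast
  ring
end

section
/- In the Kauffman bracket expansion ⟨P⟩ = Σ_{H⊆D} A^{e(D)-2e(H)}(-A²-A^{-2})^{f(H)-1} over spanning sub-dessins of the all-A dessin D, the coefficient a_{M-l} of A^{e(D)+2v(D)-2-4l} depends only on spanning sub-dessins H with g(H) ≤ l. -/
/-!
In `T a * (-T 2 - T (-2)) ^ m` the top exponent is at most `a + 2m`. For a sub-dessin `H` this is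
at most `e(D) - 2e(H) + 2f(H)`, which Euler's formula and `k(H) ≤ v(D)` bound by
`e(D) + 2v(D) - 4g(H)`. Hence sub-dessins of genus `g(H) > l` only contribute monomials of degree
below `e(D) + 2v(D) - 2 - 4l`, and dropping them leaves that coefficient unchanged.
-/

open LaurentPolynomial

/-- The coefficient of `Aⁿ` in a Laurent polynomial in `A`. -/
def lcoeff (p : LaurentPolynomial ℤ) (n : ℤ) : ℤ := p.coeff n

namespace LaurentPolynomial

section Semiring

variable {R : Type*} [Semiring R]

theorem degree_eq_supDegree (f : R[T;T⁻¹]) : f.degree = f.supDegree (↑) := by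
  rw [degree, Finset.max_eq_sup_withBot]

theorem degree_mul_le (f g : R[T;T⁻¹]) : (f * g).degree ≤ f.degree + g.degree := by
  simpa only [degree_eq_supDegree] using
    AddMonoidAlgebra.supDegree_mul_le (p := f) (q := g) (D := ((↑) : ℤ → WithBot ℤ))
      (fun a b => WithBot.coe_add a b)

theorem degree_pow_le (f : R[T;T⁻¹]) (n : ℕ) : (f ^ n).degree ≤ n • f.degree := by
  induction n with
  | zero => simpa [← T_zero] using degree_T_le (R := R) 0
  | succ n ih =>
    rw [pow_succ, succ_nsmul]
    exact (degree_mul_le _ _).trans (by gcongr)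

theorem coeff_eq_zero_of_degree_lt {f : R[T;T⁻¹]} {n : ℤ} (h : f.degree < n) :
    f.coeff n = 0 :=
  AddMonoidAlgebra.coeff_eq_zero_of_not_le_supDegree (D := ((↑) : ℤ → WithBot ℤ))
    (by rw [← degree_eq_supDegree]; exact h.not_ge)

end Semiring

section Ring

variable {R : Type*} [Ring R]

theorem degree_neg (f : R[T;T⁻¹]) : (-f).degree = f.degree := by
  simp only [degree_eq_supDegree, AddMonoidAlgebra.supDegree_neg]

theorem degree_sub_le (f g : R[T;T⁻¹]) : (f - g).degree ≤ max f.degree g.degree := by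
  simpa only [degree_eq_supDegree] using
    AddMonoidAlgebra.supDegree_sub_le (f := f) (g := g) (D := ((↑) : ℤ → WithBot ℤ))

end Ring

end LaurentPolynomial

theorem degree_loop_le : (-T 2 - T (-2) : ℤ[T;T⁻¹]).degree ≤ 2 :=
  (degree_sub_le _ _).trans <| max_le (by rw [degree_neg]; exact degree_T_le 2)
    ((degree_T_le _).trans (WithBot.coe_le_coe.mpr (by norm_num)))

theorem degree_T_mul_loop_pow_le (a : ℤ) (m : ℕ) :
    (T a * (-T 2 - T (-2)) ^ m : ℤ[T;T⁻¹]).degree ≤ ↑(a + 2 * m) :=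
  calc _ ≤ (T a : ℤ[T;T⁻¹]).degree + m • (-T 2 - T (-2) : ℤ[T;T⁻¹]).degree :=
        (degree_mul_le _ _).trans (by gcongr; exact degree_pow_le _ _)
    _ ≤ a + m • (2 : WithBot ℤ) := by gcongr; exacts [degree_T_le a, degree_loop_le]
    _ = ↑(a + 2 * m) := by
        rw [← WithBot.coe_ofNat, ← WithBot.coe_nsmul, ← WithBot.coe_add, nsmul_eq_mul, mul_comm]

theorem coefficient_depends_only_on_low_genus_general
    (E : Type) [Fintype E] (v : ℕ)
    (k fc g : Finset E → ℕ)
    (hEuler : ∀ H : Finset E, (v : ℤ) - H.card + fc H = 2 * k H - 2 * g H)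
    (hkv : ∀ H : Finset E, k H ≤ v)
    (l : ℕ) :
    lcoeff (∑ H : Finset E, T ((Fintype.card E : ℤ) - 2 * H.card) *
        (-T 2 - T (-2)) ^ (fc H - 1))
      ((Fintype.card E : ℤ) + 2 * v - 2 - 4 * l) =
    lcoeff (∑ H ∈ Finset.univ.filter fun H : Finset E => g H ≤ l,
        T ((Fintype.card E : ℤ) - 2 * H.card) *
        (-T 2 - T (-2)) ^ (fc H - 1))
      ((Fintype.card E : ℤ) + 2 * v - 2 - 4 * l) := by
  have high_genus_vanish :
      lcoeff (∑ H ∈ Finset.univ.filter fun H : Finset E => ¬ g H ≤ l,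
        T ((Fintype.card E : ℤ) - 2 * H.card) * (-T 2 - T (-2)) ^ (fc H - 1))
        ((Fintype.card E : ℤ) + 2 * v - 2 - 4 * l) = 0 := by
    simp only [lcoeff, AddMonoidAlgebra.coeff_sum, Finsupp.coe_finsetSum, Finset.sum_apply]
    refine Finset.sum_eq_zero fun H hH => coeff_eq_zero_of_degree_lt <|
      (degree_T_mul_loop_pow_le _ _).trans_lt (WithBot.coe_lt_coe.mpr ?_)
    have hgenus : l < g H := by simpa using hH
    have hEulerH := hEuler H
    have hkvH := hkv H
    omega
  rw [← Finset.sum_filter_add_sum_filter_not Finset.univ (fun H => g H ≤ l)]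
  simp only [lcoeff, AddMonoidAlgebra.coeff_add, Finsupp.add_apply] at high_genus_vanish ⊢
  rw [high_genus_vanish, add_zero]

/-- In the Kauffman bracket expansion
`⟨P⟩ = Σ_{H⊆D} A^{e(D)-2e(H)} (-A²-A^{-2})^{f(H)-1}` over spanning sub-dessins of the
all-`A` dessin `D` of a connected link projection, the coefficient `a_{M-l}` of
`A^{e(D)+2v(D)-2-4l}` depends only on spanning sub-dessins `H` with `g(H) ≤ l`:
restricting the state sum to those sub-dessins does not change that coefficient.

The bracket is a Laurent polynomial in `A` (with `T n` denoting `Aⁿ`), and the dessin is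
modeled abstractly by its edge set `E`, vertex count `v`, and the component, face and genus
counts `k H`, `fc H`, `g H` of each spanning sub-dessin, related by Euler's formula
`2g(H) = 2k(H) - v(D) + e(H) - f(H)`, with `1 ≤ k H ≤ fc H` and `k H ≤ v`. -/
theorem coefficient_depends_only_on_low_genus
    (E : Type) [Fintype E] [DecidableEq E] (v : ℕ) (hv : 1 ≤ v)
    (k fc g : Finset E → ℕ)
    (hEuler : ∀ H : Finset E, (v : ℤ) - H.card + fc H = 2 * k H - 2 * g H)
    (hk1 : ∀ H : Finset E, 1 ≤ k H)
    (hkf : ∀ H : Finset E, k H ≤ fc H)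
    (hkv : ∀ H : Finset E, k H ≤ v)
    (l : ℕ) :
    lcoeff (∑ H : Finset E, T ((Fintype.card E : ℤ) - 2 * H.card) *
        (-T 2 - T (-2)) ^ (fc H - 1))
      ((Fintype.card E : ℤ) + 2 * v - 2 - 4 * l) =
    lcoeff (∑ H ∈ Finset.univ.filter fun H : Finset E => g H ≤ l,
        T ((Fintype.card E : ℤ) - 2 * H.card) *
        (-T 2 - T (-2)) ^ (fc H - 1))
      ((Fintype.card E : ℤ) + 2 * v - 2 - 4 * l) :=
  coefficient_depends_only_on_low_genus_general E v k fc g hEuler hkv l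
end

section
/- The coefficient a_M of A^{e(D)+2v(D)-2} in the Kauffman bracket expansion over spanning sub-dessins of D equals Σ (-1)^{v(D)+e(H)-1}, summed over spanning sub-dessins H with g(H)=0 and k(H)=v(D) (i.e., every edge of H is a loop). In particular, if D has no loops then a_M = (-1)^{v(D)-1}. -/
/-! The term of `H` is `A^{e - 2|H|} δ^{f(H) - 1}` with `δ = -A² - A⁻²`, of top degree
`e - 2|H| + 2 f(H) - 2`. Euler's formula together with `k(H) ≤ v` gives `f(H) ≤ v + |H|`, so
no term reaches beyond degree `e + 2v - 2`, and a term reaches it exactly when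
`f(H) = v + |H|`, i.e. when `g(H) = 0` and `k(H) = v`; it then contributes the top coefficient
`(-1)^{f(H) - 1}` of `δ^{f(H) - 1}`. Without loops every edge drops the number of components
below `v`, so only `H = ∅` survives. -/

open LaurentPolynomial

namespace LaurentPolynomial

variable {R : Type*} [CommRing R]

theorem coeff_mul_T (p : R[T;T⁻¹]) (n d : ℤ) : (p * T n).coeff d = p.coeff (d - n) := by
  simpa [sub_eq_add_neg] using AddMonoidAlgebra.coeff_mul_single_apply p (1 : R) n d

theorem coeff_T_mul (p : R[T;T⁻¹]) (n d : ℤ) : (T n * p).coeff d = p.coeff (d - n) := by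
  rw [T_mul, coeff_mul_T]

theorem coeff_neg_T_two_sub_T_neg_two_pow (m : ℕ) {d : ℤ} (hd : 2 * m ≤ d) :
    ((-T 2 - T (-2) : R[T;T⁻¹]) ^ m).coeff d = if d = 2 * m then (-1) ^ m else 0 := by
  induction m generalizing d with
  | zero => simp [← T_zero, eq_comm]
  | succ m ih =>
    have hcoeff : ((-T 2 - T (-2) : R[T;T⁻¹]) ^ (m + 1)).coeff d =
        -((-T 2 - T (-2) : R[T;T⁻¹]) ^ m).coeff (d - 2)
          - ((-T 2 - T (-2) : R[T;T⁻¹]) ^ m).coeff (d + 2) := by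
      rw [pow_succ, mul_sub, mul_neg, AddMonoidAlgebra.coeff_sub, AddMonoidAlgebra.coeff_neg,
        Finsupp.sub_apply, Finsupp.neg_apply, coeff_mul_T, coeff_mul_T, sub_neg_eq_add]
    push_cast at hd ⊢
    rw [hcoeff, ih (d := d - 2) (by omega), ih (d := d + 2) (by omega),
      if_neg (show d + 2 ≠ 2 * (m : ℤ) by omega)]
    by_cases h : d = 2 * (m + 1)
    · rw [if_pos (show d - 2 = 2 * (m : ℤ) by omega), if_pos h, pow_succ]
      ring
    · rw [if_neg (show d - 2 ≠ 2 * (m : ℤ) by omega), if_neg h]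
      ring

theorem coeff_T_mul_neg_T_two_sub_T_neg_two_pow {e v c f : ℕ} (hf : 1 ≤ f) (hfv : f ≤ v + c) :
    (T ((e : ℤ) - 2 * c) * (-T 2 - T (-2) : R[T;T⁻¹]) ^ (f - 1)).coeff ((e : ℤ) + 2 * v - 2) =
      if f = v + c then (-1) ^ (v + c - 1) else 0 := by
  have hd : (e : ℤ) + 2 * v - 2 - (e - 2 * c) = 2 * ((v + c - 1 : ℕ) : ℤ) := by omega
  rw [coeff_T_mul, hd, coeff_neg_T_two_sub_T_neg_two_pow _ (by omega)]
  by_cases h : f = v + c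
  · simp [h]
  · rw [if_neg (show 2 * ((v + c - 1 : ℕ) : ℤ) ≠ 2 * ((f - 1 : ℕ) : ℤ) by omega), if_neg h]

end LaurentPolynomial

theorem faces_le_of_euler {v e f k g : ℕ} (heuler : (v : ℤ) - e + f = 2 * k - 2 * g)
    (hkv : k ≤ v) : f ≤ v + e := by
  omega

theorem faces_eq_iff_of_euler {v e f k g : ℕ} (heuler : (v : ℤ) - e + f = 2 * k - 2 * g)
    (hkv : k ≤ v) : f = v + e ↔ g = 0 ∧ k = v := by
  omega

section Dessin

variable {E : Type} {v : ℕ} {k fc g : Finset E → ℕ}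

theorem coeff_bracket_eq_sum_planar_loops [Fintype E]
    (hEuler : ∀ H : Finset E, (v : ℤ) - H.card + fc H = 2 * k H - 2 * g H)
    (hfc : ∀ H : Finset E, 1 ≤ fc H) (hkv : ∀ H : Finset E, k H ≤ v) :
    lcoeff (∑ H : Finset E, T ((Fintype.card E : ℤ) - 2 * H.card) *
        (-T 2 - T (-2)) ^ (fc H - 1))
      ((Fintype.card E : ℤ) + 2 * v - 2) =
    ∑ H ∈ Finset.univ.filter fun H : Finset E => g H = 0 ∧ k H = v,
        (-1 : ℤ) ^ (v + H.card - 1) := by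
  rw [lcoeff, AddMonoidAlgebra.coeff_sum, Finsupp.finsetSum_apply, Finset.sum_filter]
  refine Finset.sum_congr rfl fun H _ => ?_
  rw [coeff_T_mul_neg_T_two_sub_T_neg_two_pow (hfc H) (faces_le_of_euler (hEuler H) (hkv H))]
  exact if_congr (faces_eq_iff_of_euler (hEuler H) (hkv H)) rfl rfl

theorem eq_empty_of_components_eq_of_loopless (hv : 1 ≤ v) (hloopless : ∀ x : E, k {x} = v - 1)
    (hmono : ∀ H₁ H₂ : Finset E, H₁ ⊆ H₂ → k H₂ ≤ k H₁) {H : Finset E} (hH : k H = v) :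
    H = ∅ := by
  refine Finset.eq_empty_of_forall_notMem fun x hx => ?_
  have := hmono _ _ (Finset.singleton_subset_iff.mpr hx)
  have := hloopless x
  omega

theorem filter_planar_loops_eq_singleton_empty [Fintype E]
    (hEuler : ∀ H : Finset E, (v : ℤ) - H.card + fc H = 2 * k H - 2 * g H)
    (hkf : ∀ H : Finset E, k H ≤ fc H) (hkempty : k ∅ = v) (hv : 1 ≤ v)
    (hloopless : ∀ x : E, k {x} = v - 1)
    (hmono : ∀ H₁ H₂ : Finset E, H₁ ⊆ H₂ → k H₂ ≤ k H₁) :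
    (Finset.univ.filter fun H : Finset E => g H = 0 ∧ k H = v) = {∅} := by
  ext H
  simp only [Finset.mem_filter, Finset.mem_univ, true_and, Finset.mem_singleton]
  refine ⟨fun hH => eq_empty_of_components_eq_of_loopless hv hloopless hmono hH.2, ?_⟩
  rintro rfl
  have heuler := hEuler ∅
  have := hkf ∅
  simp only [Finset.card_empty, Nat.cast_zero] at heuler
  omega

end Dessin

/-- The dessin is modeled abstractly by its edge set `E`, vertex count `v`, and the component,
face and genus counts of spanning sub-dessins, obeying Euler's formula; `x` is a loop iff
the one-edge sub-dessin `{x}` still has `v` components, and "no loops" means each single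
edge joins two distinct vertices, `k {x} = v - 1`. -/
theorem highest_coefficient_formula_general
    (E : Type) [Fintype E] (v : ℕ) (hv : 1 ≤ v)
    (k fc g : Finset E → ℕ)
    (hEuler : ∀ H : Finset E, (v : ℤ) - H.card + fc H = 2 * k H - 2 * g H)
    (hk1 : ∀ H : Finset E, 1 ≤ k H)
    (hkf : ∀ H : Finset E, k H ≤ fc H)
    (hkv : ∀ H : Finset E, k H ≤ v)
    (hkempty : k ∅ = v)
    (hmono : ∀ H₁ H₂ : Finset E, H₁ ⊆ H₂ → k H₂ ≤ k H₁) :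
    lcoeff (∑ H : Finset E, T ((Fintype.card E : ℤ) - 2 * H.card) *
        (-T 2 - T (-2)) ^ (fc H - 1))
      ((Fintype.card E : ℤ) + 2 * v - 2) =
    (∑ H ∈ Finset.univ.filter fun H : Finset E => g H = 0 ∧ k H = v,
        (-1 : ℤ) ^ (v + H.card - 1)) ∧
    ((∀ x : E, k {x} = v - 1) →
      lcoeff (∑ H : Finset E, T ((Fintype.card E : ℤ) - 2 * H.card) *
          (-T 2 - T (-2)) ^ (fc H - 1))
        ((Fintype.card E : ℤ) + 2 * v - 2) = (-1 : ℤ) ^ (v - 1)) := by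
  have hformula := coeff_bracket_eq_sum_planar_loops hEuler
    (fun H => (hk1 H).trans (hkf H)) hkv
  refine ⟨hformula, fun hloopless => ?_⟩
  rw [hformula, filter_planar_loops_eq_singleton_empty hEuler hkf hkempty hv hloopless hmono,
    Finset.sum_singleton, Finset.card_empty, add_zero]

/-- The coefficient `a_M` of `A^{e(D)+2v(D)-2}` in the Kauffman bracket
expansion `⟨P⟩ = Σ_{H⊆D} A^{e(D)-2e(H)} (-A²-A^{-2})^{f(H)-1}` over spanning sub-dessins
of the all-`A` dessin `D` equals `Σ (-1)^{v(D)+e(H)-1}`, summed over spanning sub-dessins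
`H` with `g(H) = 0` and `k(H) = v(D)` (i.e. every edge of `H` is a loop).  In particular,
if `D` contains no loops then `a_M = (-1)^{v(D)-1}`.

The dessin is modeled abstractly by its edge set `E`, vertex count `v`, and the component,
face and genus counts of spanning sub-dessins, obeying Euler's formula; `x` is a loop iff
the one-edge sub-dessin `{x}` still has `v` components, and "no loops" means each single
edge joins two distinct vertices, `k {x} = v - 1`. -/
theorem highest_coefficient_formula
    (E : Type) [Fintype E] [DecidableEq E] (v : ℕ) (hv : 1 ≤ v)
    (k fc g : Finset E → ℕ)
    (hEuler : ∀ H : Finset E, (v : ℤ) - H.card + fc H = 2 * k H - 2 * g H)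
    (hk1 : ∀ H : Finset E, 1 ≤ k H)
    (hkf : ∀ H : Finset E, k H ≤ fc H)
    (hkv : ∀ H : Finset E, k H ≤ v)
    (hkempty : k ∅ = v)
    (hconn : k Finset.univ = 1)
    (hmono : ∀ H₁ H₂ : Finset E, H₁ ⊆ H₂ → k H₂ ≤ k H₁) :
    lcoeff (∑ H : Finset E, T ((Fintype.card E : ℤ) - 2 * H.card) *
        (-T 2 - T (-2)) ^ (fc H - 1))
      ((Fintype.card E : ℤ) + 2 * v - 2) =
    (∑ H ∈ Finset.univ.filter fun H : Finset E => g H = 0 ∧ k H = v,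
        (-1 : ℤ) ^ (v + H.card - 1)) ∧
    ((∀ x : E, k {x} = v - 1) →
      lcoeff (∑ H : Finset E, T ((Fintype.card E : ℤ) - 2 * H.card) *
          (-T 2 - T (-2)) ^ (fc H - 1))
        ((Fintype.card E : ℤ) + 2 * v - 2) = (-1 : ℤ) ^ (v - 1)) :=
  highest_coefficient_formula_general E v hv k fc g hEuler hk1 hkf hkv hkempty hmono
end
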